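/- Let f and δf be smooth functions on 𝕋^d × ℝ^d, rapidly decaying in v, with ∫_{𝕋^d×ℝ^d} δf dx dv = 0. Consider the functional G(g) := ∫_{𝕋^d} ρ(g)(x) |E(g)(x)|² dx (which equals [[T,U],U](g)). Then d/dε|_{ε=0} G(f + ε δf) = ∫_{𝕋^d×ℝ^d} K(f)(x) δf(x,v) dx dv, where K(f) := |E(f)|² − 2 G₀(f) and G₀(f) : 𝕋^d → ℝ is the unique smooth zero-mean solution of Δ_x G₀(f) = div_x( ρ(f) E(f) ). That is, the Fréchet derivative of [[T,U],U] at f is the function of x alone K(f)(x) = |E(f)(x)|² − 2 Δ_x^{-1} div_x(ρ(f)E(f))(x). -/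

import Mathlib

open MeasureTheory Real

noncomputable section

/-- Points of `ℝ^d` (also used as lifts of points of the torus `𝕋^d = ℝ^d/(2πℤ)^d`). -/
abbrev Vec (d : ℕ) := Fin d → ℝ

/-- A fundamental domain for the torus `𝕋^d = ℝ^d/(2πℤ)^d`. -/
def Box (d : ℕ) : Set (Vec d) := Set.pi Set.univ fun _ => Set.Ioc 0 (2 * π)

/-- Partial derivative `∂_{x_i}`. -/
def pd {d : ℕ} (i : Fin d) (g : Vec d → ℝ) : Vec d → ℝ :=
  fun x => fderiv ℝ g x (Pi.single i 1)

/-- Laplacian `Δ = ∑ i ∂_{x_i}²`. -/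
def lap {d : ℕ} (g : Vec d → ℝ) : Vec d → ℝ := fun x => ∑ i, pd i (pd i g) x

/-- `(2πℤ)^d`-periodicity: a function of `x ∈ ℝ^d` descending to the torus. -/
def PeriodicVec {d : ℕ} (g : Vec d → ℝ) : Prop :=
  ∀ (x : Vec d) (k : Fin d → ℤ), g (fun i => x i + 2 * π * (k i : ℝ)) = g x

/-- `G` is the smooth, `2π`-periodic, zero-mean solution of `Δ G = rhs` on the torus. -/
def ZeroMeanLapSol {d : ℕ} (rhs G : Vec d → ℝ) : Prop :=
  ContDiff ℝ (⊤ : ℕ∞) G ∧ PeriodicVec G ∧ (∫ x in Box d, G x) = 0 ∧ ∀ x, lap G x = rhs x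

/-- A smooth function on `𝕋^d × ℝ^d` (presented as a `2π`-periodic-in-`x` function on
`ℝ^d × ℝ^d`) which is rapidly decaying in `v` together with all its derivatives. -/
def GoodPhase {d : ℕ} (f : Vec d → Vec d → ℝ) : Prop :=
  ContDiff ℝ (⊤ : ℕ∞) (fun p : Vec d × Vec d => f p.1 p.2) ∧
  (∀ (x v : Vec d) (k : Fin d → ℤ), f (fun i => x i + 2 * π * (k i : ℝ)) v = f x v) ∧
  (∀ n k : ℕ, ∃ C : ℝ, ∀ x v : Vec d,
    ‖v‖ ^ k * ‖iteratedFDeriv ℝ n (fun p : Vec d × Vec d => f p.1 p.2) (x, v)‖ ≤ C)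

/-- Density `ρ(f)(x) = ∫ f(x,v) dv`. -/
def dens {d : ℕ} (f : Vec d → Vec d → ℝ) : Vec d → ℝ := fun x => ∫ v, f x v

/-- Total mass `m(f) = (2π)^{-d} ∫∫ f dx dv`. -/
def mTot {d : ℕ} (f : Vec d → Vec d → ℝ) : ℝ :=
  ((2 * π) ^ d)⁻¹ * ∫ x in Box d, ∫ v, f x v

/-- `φ` is the electric potential of `f`: the smooth `2π`-periodic zero-mean solution of
`−Δφ = ρ(f) − m(f)`, i.e. `Δφ = m(f) − ρ(f)`. -/
def IsElectricPotential {d : ℕ} (f : Vec d → Vec d → ℝ) (φ : Vec d → ℝ) : Prop :=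
  ZeroMeanLapSol (fun x => mTot f - dens f x) φ

/-- Partial derivative in `x` of a phase-space function. -/
def pdx {d : ℕ} (i : Fin d) (f : Vec d → Vec d → ℝ) : Vec d → Vec d → ℝ :=
  fun x v => pd i (fun y => f y v) x

/-- Partial derivative in `v` of a phase-space function. -/
def pdv {d : ℕ} (i : Fin d) (f : Vec d → Vec d → ℝ) : Vec d → Vec d → ℝ :=
  fun x v => pd i (fun w => f x w) v

section Aux

variable {d : ℕ}

lemma box_subset_Icc : Box d ⊆ Set.Icc (0 : Vec d) (fun _ => 2 * π) := by
  rw [← Set.pi_univ_Icc]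
  exact Set.pi_mono fun i _ => Set.Ioc_subset_Icc_self

lemma measurableSet_box : MeasurableSet (Box d) :=
  MeasurableSet.univ_pi fun _ => measurableSet_Ioc

lemma integrableOn_box {g : Vec d → ℝ} (hg : Continuous g) : IntegrableOn g (Box d) :=
  (hg.continuousOn.integrableOn_compact isCompact_Icc).mono_set box_subset_Icc

lemma volume_box : (volume (Box d)).toReal = (2 * π) ^ d := by
  rw [Box, volume_pi_pi]
  simp [Real.volume_Ioc, ENNReal.toReal_prod, ENNReal.toReal_ofReal Real.two_pi_pos.le,
    ENNReal.toReal_ofReal Real.pi_pos.le]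

lemma contDiff_pd {g : Vec d → ℝ} (hg : ContDiff ℝ (⊤ : ℕ∞) g) (i : Fin d) :
    ContDiff ℝ (⊤ : ℕ∞) (pd i g) := by
  have h1 : ContDiff ℝ (⊤ : ℕ∞) (fderiv ℝ g) := hg.fderiv_right (by simp)
  exact h1.clm_apply contDiff_const

lemma pd_continuous {g : Vec d → ℝ} (hg : ContDiff ℝ (⊤ : ℕ∞) g) (i : Fin d) :
    Continuous (pd i g) := (contDiff_pd hg i).continuous

end Aux
section Aux2
variable {d : ℕ}

lemma insertNth_periodic {u : Vec (d+1) → ℝ} (hper : PeriodicVec u) (i : Fin (d+1))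
    (y : Vec d) : u (i.insertNth (2 * π) y) = u (i.insertNth 0 y) := by
  have h := hper (i.insertNth 0 y) (Pi.single i 1)
  rw [← h]
  congr 1
  funext j
  rcases eq_or_ne j i with rfl | hne
  · simp
  · rcases Fin.exists_succAbove_eq hne with ⟨j', rfl⟩
    simp [Pi.single_eq_of_ne (Fin.succAbove_ne i j')]

lemma int_pd_zero {u : Vec d → ℝ} (hdiff : Differentiable ℝ u)
    (hper : PeriodicVec u) (i : Fin d) (hcont : Continuous (pd i u)) :
    ∫ x in Box d, pd i u x = 0 := by
  cases d with
  | zero => exact i.elim0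
  | succ n =>
    set a : Vec (n+1) := 0 with ha
    set b : Vec (n+1) := fun _ => 2 * π with hb
    have hle : a ≤ b := fun j => by simp [ha, hb, Real.two_pi_pos.le]
    set F : Fin (n+1) → Vec (n+1) → ℝ := fun j => if j = i then u else 0 with hF
    set F' : Fin (n+1) → Vec (n+1) → Vec (n+1) →L[ℝ] ℝ :=
      fun j x => if j = i then fderiv ℝ u x else 0 with hF'
    have hsum : ∀ x, (∑ j, F' j x (Pi.single j 1)) = pd i u x := by
      intro x
      rw [Finset.sum_eq_single i]
      · simp [hF', pd]
      · intro j _ hj; simp [hF', hj]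
      · intro h; exact absurd (Finset.mem_univ i) h
    have key := MeasureTheory.integral_divergence_of_hasFDerivAt_off_countable'
      a b hle F F' ∅ Set.countable_empty
      (fun j => by
        rcases eq_or_ne j i with rfl | hj
        · simpa [hF] using hdiff.continuous.continuousOn
        · simp [hF, hj]; exact continuousOn_const)
      (fun x _ j => by
        rcases eq_or_ne j i with rfl | hj
        · simpa [hF, hF'] using (hdiff x).hasFDerivAt
        · simp [hF, hF', hj]; exact hasFDerivAt_const (0:ℝ) x)
      (by
        refine (ContinuousOn.integrableOn_compact isCompact_Icc ?_)
        refine (continuous_congr ?_).mpr hcont |>.continuousOn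
        intro x; exact hsum x)
    have hbox : ∫ x in Box (n+1), pd i u x = ∫ x in Set.Icc a b, pd i u x := by
      rw [Box, volume_pi]
      exact setIntegral_congr_set MeasureTheory.Measure.univ_pi_Ioc_ae_eq_Icc
    rw [hbox]
    calc ∫ x in Set.Icc a b, pd i u x
        = ∫ x in Set.Icc a b, ∑ j, F' j x (Pi.single j 1) := by
          refine setIntegral_congr_fun measurableSet_Icc fun x _ => (hsum x).symm
      _ = ∑ j, ((∫ y in Set.Icc (a ∘ j.succAbove) (b ∘ j.succAbove), F j (j.insertNth (b j) y)) -
            ∫ y in Set.Icc (a ∘ j.succAbove) (b ∘ j.succAbove), F j (j.insertNth (a j) y)) := key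
      _ = 0 := by
          refine Finset.sum_eq_zero fun j _ => ?_
          rcases eq_or_ne j i with rfl | hj
          · have : ∀ y : Vec n, F j (j.insertNth (b j) y) = F j (j.insertNth (a j) y) := by
              intro y
              simp only [hF, if_pos rfl, ha, hb]
              exact insertNth_periodic hper j y
            rw [integral_congr_ae (Filter.Eventually.of_forall fun y => this y), sub_self]
          · simp [hF, hj]

end Aux2
section Aux3
variable {d : ℕ}

lemma pd_add {u w : Vec d → ℝ} {x : Vec d} (i : Fin d)
    (hu : DifferentiableAt ℝ u x) (hw : DifferentiableAt ℝ w x) :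
    pd i (fun y => u y + w y) x = pd i u x + pd i w x := by
  simp [pd, fderiv_fun_add hu hw]

lemma pd_sub {u w : Vec d → ℝ} {x : Vec d} (i : Fin d)
    (hu : DifferentiableAt ℝ u x) (hw : DifferentiableAt ℝ w x) :
    pd i (fun y => u y - w y) x = pd i u x - pd i w x := by
  simp [pd, fderiv_fun_sub hu hw]

lemma pd_const_mul {u : Vec d → ℝ} {x : Vec d} (i : Fin d) (c : ℝ)
    (hu : DifferentiableAt ℝ u x) :
    pd i (fun y => c * u y) x = c * pd i u x := by
  simp [pd, fderiv_const_mul hu c]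

lemma pd_mul {u w : Vec d → ℝ} {x : Vec d} (i : Fin d)
    (hu : DifferentiableAt ℝ u x) (hw : DifferentiableAt ℝ w x) :
    pd i (fun y => u y * w y) x = pd i u x * w x + u x * pd i w x := by
  simp [pd, fderiv_fun_mul hu hw]; ring

lemma periodic_pd {u : Vec d → ℝ} (hper : PeriodicVec u)
    (hdiff : Differentiable ℝ u) (i : Fin d) : PeriodicVec (pd i u) := by
  intro x k
  set c : Vec d := fun j => 2 * π * (k j : ℝ) with hc
  have hxc : ∀ y : Vec d, (fun j => y j + 2 * π * (k j : ℝ)) = y + c := fun y => rfl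
  have hu : (fun y => u (y + c)) = u := by
    funext y
    rw [← hxc y, hper y k]
  have h1 : HasFDerivAt (fun y => u (y + c)) (fderiv ℝ u (x + c)) x := by
    simpa [Function.comp_def] using ((hdiff (x + c)).hasFDerivAt.comp x ((hasFDerivAt_id x).add_const c))
  have h2 : fderiv ℝ u x = fderiv ℝ u (x + c) := by
    conv_lhs => rw [← hu]
    exact h1.fderiv
  show pd i u (fun j => x j + 2 * π * (k j : ℝ)) = pd i u x
  rw [hxc x]
  show fderiv ℝ u (x + c) (Pi.single i 1) = fderiv ℝ u x (Pi.single i 1)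
  rw [h2]

lemma ibp {u w : Vec d → ℝ} (i : Fin d)
    (hud : Differentiable ℝ u) (hwd : Differentiable ℝ w)
    (hucont : Continuous (pd i u)) (hwcont : Continuous (pd i w))
    (hup : PeriodicVec u) (hwp : PeriodicVec w) :
    ∫ x in Box d, pd i u x * w x = - ∫ x in Box d, u x * pd i w x := by
  have hpd : ∀ x, pd i (fun y => u y * w y) x = pd i u x * w x + u x * pd i w x :=
    fun x => pd_mul i (hud x) (hwd x)
  have hcont : Continuous (pd i (fun y => u y * w y)) := by
    have : Continuous (fun x => pd i u x * w x + u x * pd i w x) :=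
      (hucont.mul hwd.continuous).add (hud.continuous.mul hwcont)
    exact (continuous_congr fun x => (hpd x).symm).mp this
  have hper : PeriodicVec (fun y => u y * w y) := fun x k => by
    simp only [hup x k, hwp x k]
  have h0 := int_pd_zero (u := fun y => u y * w y) (hud.mul hwd) hper i hcont
  rw [show (fun x => pd i (fun y => u y * w y) x) = fun x => pd i u x * w x + u x * pd i w x
      from funext hpd] at h0
  rw [integral_add (integrableOn_box (hucont.fun_mul hwd.continuous))
      (integrableOn_box (hud.continuous.fun_mul hwcont))] at h0
  linarith

lemma int_lap_mul {G ψ : Vec d → ℝ} (hG : ContDiff ℝ (⊤ : ℕ∞) G) (hGp : PeriodicVec G)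
    (hψ : ContDiff ℝ (⊤ : ℕ∞) ψ) (hψp : PeriodicVec ψ) :
    ∫ x in Box d, lap G x * ψ x = ∫ x in Box d, G x * lap ψ x := by
  have hGd := hG.differentiable (by simp)
  have hψd := hψ.differentiable (by simp)
  have key : ∀ i : Fin d, ∫ x in Box d, pd i (pd i G) x * ψ x
      = ∫ x in Box d, G x * pd i (pd i ψ) x := by
    intro i
    rw [ibp i ((contDiff_pd hG i).differentiable (by simp)) hψd
        (pd_continuous (contDiff_pd hG i) i) (pd_continuous hψ i)
        (periodic_pd hGp hGd i) hψp,
      ibp i hGd ((contDiff_pd hψ i).differentiable (by simp))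
        (pd_continuous hG i) (pd_continuous (contDiff_pd hψ i) i) hGp
        (periodic_pd hψp hψd i),
      neg_neg]
  calc ∫ x in Box d, lap G x * ψ x
      = ∫ x in Box d, ∑ i, pd i (pd i G) x * ψ x := by
        simp only [lap, Finset.sum_mul]
    _ = ∑ i, ∫ x in Box d, pd i (pd i G) x * ψ x := by
        refine integral_finset_sum _ fun i _ => integrableOn_box ?_
        exact (pd_continuous (contDiff_pd hG i) i).mul hψ.continuous
    _ = ∑ i, ∫ x in Box d, G x * pd i (pd i ψ) x := Finset.sum_congr rfl fun i _ => key i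
    _ = ∫ x in Box d, ∑ i, G x * pd i (pd i ψ) x := by
        refine (integral_finset_sum _ fun i _ => integrableOn_box ?_).symm
        exact hG.continuous.mul (pd_continuous (contDiff_pd hψ i) i)
    _ = ∫ x in Box d, G x * lap ψ x := by
        simp only [lap, Finset.mul_sum]

end Aux3
section Aux4
variable {d : ℕ}

lemma lap_sub {G1 G2 : Vec d → ℝ} (h1 : ContDiff ℝ (⊤ : ℕ∞) G1) (h2 : ContDiff ℝ (⊤ : ℕ∞) G2) (x : Vec d) :
    lap (fun y => G1 y - G2 y) x = lap G1 x - lap G2 x := by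
  have e1 : ∀ i : Fin d, pd i (fun y => G1 y - G2 y) = fun y => pd i G1 y - pd i G2 y := by
    intro i; funext y
    exact pd_sub i (h1.differentiable (by simp) y) (h2.differentiable (by simp) y)
  simp only [lap, ← Finset.sum_sub_distrib]
  refine Finset.sum_congr rfl fun i _ => ?_
  rw [e1 i]
  exact pd_sub i ((contDiff_pd h1 i).differentiable (by simp) x)
    ((contDiff_pd h2 i).differentiable (by simp) x)

lemma pd_eq_zero_everywhere {h : Vec d → ℝ} (hc : Continuous h)
    (hp : PeriodicVec h)
    (hz : ∀ x ∈ Set.Icc (0 : Vec d) (fun _ => 2 * π), h x = 0) : ∀ y, h y = 0 := by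
  intro y
  set k : Fin d → ℤ := fun j => -⌊y j / (2 * π)⌋ with hk
  have := hp y k
  rw [← this]
  apply hz
  rw [← Set.pi_univ_Icc]
  intro j _
  show y j + 2 * π * (k j : ℝ) ∈ Set.Icc 0 (2 * π)
  have h2π : (0:ℝ) < 2 * π := Real.two_pi_pos
  have : y j + 2 * π * (k j : ℝ) = 2 * π * Int.fract (y j / (2 * π)) := by
    rw [Int.fract]
    push_cast [hk]
    field_simp
    ring
  rw [this]
  constructor
  · exact mul_nonneg (by positivity) (Int.fract_nonneg _)
  · have := Int.fract_lt_one (y j / (2 * π))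
    nlinarith [Int.fract_nonneg (y j / (2 * π))]

lemma zeroMeanLapSol_unique {r G1 G2 : Vec d → ℝ}
    (h1 : ZeroMeanLapSol r G1) (h2 : ZeroMeanLapSol r G2) : G1 = G2 := by
  obtain ⟨hs1, hp1, hm1, hl1⟩ := h1
  obtain ⟨hs2, hp2, hm2, hl2⟩ := h2
  set h : Vec d → ℝ := fun x => G1 x - G2 x with hh
  have hsm : ContDiff ℝ (⊤ : ℕ∞) h := hs1.sub hs2
  have hd := hsm.differentiable (by simp)
  have hp : PeriodicVec h := fun x k => by simp only [hh, hp1 x k, hp2 x k]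
  have hlap : ∀ x, lap h x = 0 := by
    intro x
    rw [hh, lap_sub hs1 hs2, hl1, hl2, sub_self]
  have each : ∀ i : Fin d, ∫ x in Box d, pd i h x * pd i h x
      = - ∫ x in Box d, h x * pd i (pd i h) x := fun i =>
    ibp i hd ((contDiff_pd hsm i).differentiable (by simp)) (pd_continuous hsm i)
      (pd_continuous (contDiff_pd hsm i) i) hp (periodic_pd hp hd i)
  have energy : ∑ i, ∫ x in Box d, pd i h x * pd i h x = 0 := by
    calc ∑ i, ∫ x in Box d, pd i h x * pd i h x
        = ∑ i, - ∫ x in Box d, h x * pd i (pd i h) x :=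
          Finset.sum_congr rfl fun i _ => each i
      _ = - ∑ i, ∫ x in Box d, h x * pd i (pd i h) x := by
          rw [← Finset.sum_neg_distrib]
      _ = - ∫ x in Box d, ∑ i, h x * pd i (pd i h) x := by
          rw [integral_finset_sum _ fun i _ => integrableOn_box
            (hd.continuous.fun_mul (pd_continuous (contDiff_pd hsm i) i))]
      _ = 0 := by
          have hz : ∀ x, ∑ i, h x * pd i (pd i h) x = 0 := fun x => by
            rw [← Finset.mul_sum, show ∑ i, pd i (pd i h) x = lap h x from rfl, hlap x,
              mul_zero]
          simp [hz]
  set g : Vec d → ℝ := fun x => ∑ i, pd i h x * pd i h x with hg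
  have hgc : Continuous g := continuous_finset_sum _ fun i _ =>
    (pd_continuous hsm i).mul (pd_continuous hsm i)
  have hgnn : ∀ x, 0 ≤ g x := fun x => Finset.sum_nonneg fun i _ => mul_self_nonneg _
  have hint_g : ∫ x in Box d, g x = 0 := by
    rw [hg]
    rw [integral_finset_sum _ fun i _ => integrableOn_box
      ((pd_continuous hsm i).fun_mul (pd_continuous hsm i))]
    exact energy
  have haeg : g =ᵐ[volume.restrict (Box d)] 0 :=
    (setIntegral_eq_zero_iff_of_nonneg_ae (Filter.Eventually.of_forall hgnn)
      (integrableOn_box hgc)).mp hint_g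
  have hT : volume {x : Vec d | ¬ (x ∈ Box d → g x = 0)} = 0 := by
    have := (ae_restrict_iff' measurableSet_box).mp haeg
    exact ae_iff.mp this
  set U : Set (Vec d) := Set.pi Set.univ fun _ => Set.Ioo 0 (2 * π) with hU
  have hUopen : IsOpen U := isOpen_set_pi Set.finite_univ fun _ _ => isOpen_Ioo
  have hUsub : U ⊆ Box d := Set.pi_mono fun i _ => Set.Ioo_subset_Ioc_self
  have hgU : ∀ x ∈ U, g x = 0 := by
    by_contra hcon
    push_neg at hcon
    obtain ⟨x₀, hx₀U, hx₀⟩ := hcon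
    set S : Set (Vec d) := U ∩ g ⁻¹' {0}ᶜ with hS
    have hSopen : IsOpen S := hUopen.inter (isOpen_compl_iff.mpr isClosed_singleton |>.preimage hgc)
    have hSne : S.Nonempty := ⟨x₀, hx₀U, hx₀⟩
    have hpos : 0 < volume S := hSopen.measure_pos volume hSne
    have hsub : S ⊆ {x : Vec d | ¬ (x ∈ Box d → g x = 0)} := by
      rintro z ⟨hzU, hz⟩
      intro hcontra
      exact hz (hcontra (hUsub hzU))
    exact absurd (le_antisymm ((measure_mono hsub).trans hT.le) (zero_le)) hpos.ne'
  have hpdU : ∀ (i : Fin d), ∀ x ∈ U, pd i h x = 0 := by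
    intro i x hx
    have := hgU x hx
    rw [hg] at this
    have := (Finset.sum_eq_zero_iff_of_nonneg fun j _ => mul_self_nonneg (pd j h x)).mp this
      i (Finset.mem_univ i)
    exact mul_self_eq_zero.mp this
  have hpdIcc : ∀ (i : Fin d), ∀ x ∈ Set.Icc (0 : Vec d) (fun _ => 2 * π), pd i h x = 0 := by
    intro i
    have hclosed : IsClosed {x : Vec d | pd i h x = 0} :=
      isClosed_eq (pd_continuous hsm i) continuous_const
    have hcl : closure U ⊆ {x : Vec d | pd i h x = 0} :=
      hclosed.closure_subset_iff.mpr (hpdU i)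
    intro x hx
    apply hcl
    rw [hU, closure_pi_set]
    rw [← Set.pi_univ_Icc] at hx
    intro j hj
    have := hx j hj
    show x j ∈ closure (Set.Ioo 0 (2 * π))
    rw [closure_Ioo Real.two_pi_pos.ne]
    exact this
  have hpdzero : ∀ (i : Fin d) (y : Vec d), pd i h y = 0 := fun i =>
    pd_eq_zero_everywhere (pd_continuous hsm i) (periodic_pd hp hd i) (hpdIcc i)
  have hfz : ∀ y, fderiv ℝ h y = 0 := by
    intro y
    apply ContinuousLinearMap.ext
    intro w
    have hw : w = ∑ i, w i • (Pi.single i (1 : ℝ) : Vec d) := by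
      funext j
      rw [Finset.sum_apply]
      simp [Pi.single_apply]
    rw [ContinuousLinearMap.zero_apply, hw, map_sum]
    refine Finset.sum_eq_zero fun i _ => ?_
    rw [ContinuousLinearMap.map_smul]
    have : fderiv ℝ h y (Pi.single i 1) = 0 := hpdzero i y
    rw [this, smul_zero]
  have hconst := is_const_of_fderiv_eq_zero hd hfz
  have hmean : ∫ x in Box d, h x = 0 := by
    rw [hh]
    rw [integral_sub (integrableOn_box hs1.continuous) (integrableOn_box hs2.continuous),
      hm1, hm2, sub_self]
  have hval : ∫ x in Box d, h x = (2 * π) ^ d * h 0 := by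
    rw [show (fun x : Vec d => h x) = fun _ => h 0 from funext fun y => hconst y 0]
    rw [setIntegral_const, measureReal_def, volume_box, smul_eq_mul]
  have h00 : h 0 = 0 := by
    have h2π : ((2 : ℝ) * π) ^ d ≠ 0 := pow_ne_zero _ (ne_of_gt Real.two_pi_pos)
    have := hval.symm.trans hmean
    exact (mul_eq_zero.mp this).resolve_left h2π
  funext x
  have : h x = 0 := (hconst x 0).trans h00
  exact sub_eq_zero.mp this

end Aux4
section Aux5
variable {d : ℕ} {f : Vec d → Vec d → ℝ}

lemma integrable_decay : Integrable (fun v : Vec d => (((1:ℝ) + ‖v‖) ^ (d+1))⁻¹) := by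
  have hfin : (Module.finrank ℝ (Vec d) : ℝ) < ((d+1 : ℕ) : ℝ) := by
    rw [Module.finrank_pi]
    simp
  have h := integrable_one_add_norm (E := Vec d) (μ := volume) hfin
  refine h.congr' h.aestronglyMeasurable ?_ |>.congr ?_
  · exact Filter.EventuallyEq.rfl
  · refine Filter.Eventually.of_forall fun v => ?_
    have h2 : ((1:ℝ) + ‖v‖) ^ (-((d+1:ℕ):ℝ)) = ((1 + ‖v‖) ^ (d+1:ℕ))⁻¹ := by
      rw [Real.rpow_neg (by positivity), Real.rpow_natCast]
    exact h2

/-- Uniform decay bound on the `n`-th derivative. -/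
lemma GoodPhase.bound (hf : GoodPhase f) (n : ℕ) :
    ∃ C : ℝ, ∀ x v : Vec d,
      ‖iteratedFDeriv ℝ n (fun p : Vec d × Vec d => f p.1 p.2) (x, v)‖
        ≤ C * (((1:ℝ) + ‖v‖) ^ (d+1))⁻¹ := by
  choose C hC using fun k => hf.2.2 n k
  refine ⟨∑ k ∈ Finset.range (d+2), ((d+1).choose k : ℝ) * max (C k) 0, fun x v => ?_⟩
  set N := ‖iteratedFDeriv ℝ n (fun p : Vec d × Vec d => f p.1 p.2) (x, v)‖ with hN
  have hNnn : 0 ≤ N := norm_nonneg _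
  have hb : (0:ℝ) < (1 + ‖v‖) ^ (d+1) := by positivity
  have key : (1 + ‖v‖) ^ (d+1) * N ≤ ∑ k ∈ Finset.range (d+2), ((d+1).choose k : ℝ) * max (C k) 0 := by
    have expand : (1 + ‖v‖) ^ (d+1) = ∑ k ∈ Finset.range (d+2), ‖v‖ ^ k * ((d+1).choose k : ℝ) := by
      rw [add_comm (1:ℝ) ‖v‖]
      simpa using add_pow ‖v‖ 1 (d+1)
    rw [expand, Finset.sum_mul]
    refine Finset.sum_le_sum fun k _ => ?_
    have : ‖v‖ ^ k * ((d+1).choose k : ℝ) * N = (‖v‖ ^ k * N) * ((d+1).choose k : ℝ) := by ring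
    rw [this, mul_comm (((d+1).choose k : ℝ)) (max (C k) 0)]
    refine mul_le_mul_of_nonneg_right ((hC k x v).trans (le_max_left _ _)) (by positivity)
  calc N = ((1 + ‖v‖) ^ (d+1))⁻¹ * ((1 + ‖v‖) ^ (d+1) * N) := by
        field_simp
    _ ≤ ((1 + ‖v‖) ^ (d+1))⁻¹ * (∑ k ∈ Finset.range (d+2), ((d+1).choose k : ℝ) * max (C k) 0) :=
        mul_le_mul_of_nonneg_left key (by positivity)
    _ = _ := mul_comm _ _

lemma GoodPhase.continuous_slice (hf : GoodPhase f) (x : Vec d) :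
    Continuous fun v => f x v :=
  hf.1.continuous.comp (Continuous.prodMk_right x)

lemma GoodPhase.norm_le (hf : GoodPhase f) :
    ∃ C : ℝ, ∀ x v : Vec d, ‖f x v‖ ≤ C * (((1:ℝ) + ‖v‖) ^ (d+1))⁻¹ := by
  obtain ⟨C, hC⟩ := hf.bound 0
  exact ⟨C, fun x v => by simpa [norm_iteratedFDeriv_zero] using hC x v⟩

lemma GoodPhase.integrable_v (hf : GoodPhase f) (x : Vec d) :
    Integrable (fun v => f x v) := by
  obtain ⟨C, hC⟩ := hf.norm_le
  exact (integrable_decay.const_mul C).mono'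
    (hf.continuous_slice x).aestronglyMeasurable
    (Filter.Eventually.of_forall fun v => by
      simpa using hC x v)

lemma GoodPhase.dens_continuous (hf : GoodPhase f) : Continuous (dens f) := by
  obtain ⟨C, hC⟩ := hf.norm_le
  refine continuous_of_dominated (fun x => (hf.continuous_slice x).aestronglyMeasurable)
    (fun x => Filter.Eventually.of_forall fun v => hC x v)
    (integrable_decay.const_mul C)
    (Filter.Eventually.of_forall fun v => hf.1.continuous.comp (Continuous.prodMk_left v))

lemma GoodPhase.dens_periodic (hf : GoodPhase f) : PeriodicVec (dens f) := by
  intro x k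
  simp only [dens]
  congr 1
  funext v
  exact hf.2.1 x v k

/-- The `x`-derivative of a slice as a composition. -/
lemma slice_hasFDerivAt (hf : GoodPhase f) (x v : Vec d) :
    HasFDerivAt (fun y => f y v)
      ((fderiv ℝ (fun p : Vec d × Vec d => f p.1 p.2) (x, v)).comp
        (ContinuousLinearMap.inl ℝ (Vec d) (Vec d))) x :=
  ((hf.1.differentiable (by simp)) (x, v)).hasFDerivAt.comp (f := fun y => (y, v)) x (hasFDerivAt_prodMk_left x v)

lemma norm_comp_inl_le (L : Vec d × Vec d →L[ℝ] ℝ) :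
    ‖L.comp (ContinuousLinearMap.inl ℝ (Vec d) (Vec d))‖ ≤ ‖L‖ := by
  refine ContinuousLinearMap.opNorm_le_bound _ (norm_nonneg L) fun x => ?_
  have h1 : ‖((x, (0 : Vec d)) : Vec d × Vec d)‖ = ‖x‖ := by
    simp [Prod.norm_def]
  calc ‖L (x, 0)‖ ≤ ‖L‖ * ‖((x, (0 : Vec d)) : Vec d × Vec d)‖ := L.le_opNorm _
    _ = ‖L‖ * ‖x‖ := by rw [h1]

lemma norm_fderiv_le_iterated (F : Vec d × Vec d → ℝ) (p : Vec d × Vec d)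
    (hF : Differentiable ℝ F) :
    ‖fderiv ℝ F p‖ ≤ ‖iteratedFDeriv ℝ 1 F p‖ := by
  refine ContinuousLinearMap.opNorm_le_bound _ (norm_nonneg _) fun u => ?_
  have h1 : fderiv ℝ F p u = iteratedFDeriv ℝ 1 F p (fun _ => u) := by
    rw [iteratedFDeriv_one_apply]
  rw [h1]
  calc ‖iteratedFDeriv ℝ 1 F p (fun _ => u)‖
      ≤ ‖iteratedFDeriv ℝ 1 F p‖ * ∏ _i : Fin 1, ‖u‖ :=
        (iteratedFDeriv ℝ 1 F p).le_opNorm _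
    _ = ‖iteratedFDeriv ℝ 1 F p‖ * ‖u‖ := by simp

end Aux5
section Aux6
variable {d : ℕ} {f : Vec d → Vec d → ℝ}

lemma GoodPhase.densHasFDerivAt (hf : GoodPhase f) (x₀ : Vec d) :
    HasFDerivAt (dens f)
      (∫ v, (fderiv ℝ (fun p : Vec d × Vec d => f p.1 p.2) (x₀, v)).comp
        (ContinuousLinearMap.inl ℝ (Vec d) (Vec d))) x₀ := by
  obtain ⟨C1, hC1⟩ := hf.bound 1
  have hFd : Differentiable ℝ (fun p : Vec d × Vec d => f p.1 p.2) :=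
    hf.1.differentiable (by simp)
  have hfderiv_cont : Continuous (fderiv ℝ (fun p : Vec d × Vec d => f p.1 p.2)) :=
    hf.1.continuous_fderiv (by simp)
  have hbound : ∀ x v : Vec d,
      ‖(fderiv ℝ (fun p : Vec d × Vec d => f p.1 p.2) (x, v)).comp
        (ContinuousLinearMap.inl ℝ (Vec d) (Vec d))‖ ≤ C1 * (((1:ℝ) + ‖v‖) ^ (d+1))⁻¹ :=
    fun x v => (norm_comp_inl_le _).trans
      ((norm_fderiv_le_iterated _ _ hFd).trans (hC1 x v))
  refine hasFDerivAt_integral_of_dominated_of_fderiv_le (s := Set.univ) Filter.univ_mem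
    (Filter.Eventually.of_forall fun x => (hf.continuous_slice x).aestronglyMeasurable)
    (hf.integrable_v x₀)
    (((hfderiv_cont.comp (Continuous.prodMk_right x₀)).clm_comp
      continuous_const).aestronglyMeasurable)
    (Filter.Eventually.of_forall fun v x _ => hbound x v)
    (integrable_decay.const_mul C1)
    (Filter.Eventually.of_forall fun v x _ => slice_hasFDerivAt hf x v)

lemma GoodPhase.dens_differentiable (hf : GoodPhase f) : Differentiable ℝ (dens f) :=
  fun x => (hf.densHasFDerivAt x).differentiableAt

lemma GoodPhase.integrable_F' (hf : GoodPhase f) (x : Vec d) :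
    Integrable (fun v => (fderiv ℝ (fun p : Vec d × Vec d => f p.1 p.2) (x, v)).comp
      (ContinuousLinearMap.inl ℝ (Vec d) (Vec d))) := by
  obtain ⟨C1, hC1⟩ := hf.bound 1
  have hFd : Differentiable ℝ (fun p : Vec d × Vec d => f p.1 p.2) :=
    hf.1.differentiable (by simp)
  have hfderiv_cont : Continuous (fderiv ℝ (fun p : Vec d × Vec d => f p.1 p.2)) :=
    hf.1.continuous_fderiv (by simp)
  refine (integrable_decay.const_mul C1).mono'
    (((hfderiv_cont.comp (Continuous.prodMk_right x)).clm_comp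
      continuous_const).aestronglyMeasurable)
    (Filter.Eventually.of_forall fun v => ?_)
  exact (norm_comp_inl_le _).trans ((norm_fderiv_le_iterated _ _ hFd).trans (hC1 x v))

lemma GoodPhase.pd_dens_continuous (hf : GoodPhase f) (i : Fin d) :
    Continuous (pd i (dens f)) := by
  obtain ⟨C1, hC1⟩ := hf.bound 1
  have hFd : Differentiable ℝ (fun p : Vec d × Vec d => f p.1 p.2) :=
    hf.1.differentiable (by simp)
  have hfderiv_cont : Continuous (fderiv ℝ (fun p : Vec d × Vec d => f p.1 p.2)) :=
    hf.1.continuous_fderiv (by simp)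
  have heq : ∀ x, pd i (dens f) x
      = ∫ v, fderiv ℝ (fun p : Vec d × Vec d => f p.1 p.2) (x, v)
          ((Pi.single i 1 : Vec d), (0 : Vec d)) := by
    intro x
    have h1 : fderiv ℝ (dens f) x
        = ∫ v, (fderiv ℝ (fun p : Vec d × Vec d => f p.1 p.2) (x, v)).comp
            (ContinuousLinearMap.inl ℝ (Vec d) (Vec d)) := (hf.densHasFDerivAt x).fderiv
    rw [pd, h1, ContinuousLinearMap.integral_apply (hf.integrable_F' x)]
    refine integral_congr_ae (Filter.Eventually.of_forall fun v => ?_)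
    simp
  have hnorm_pair : ‖((Pi.single i 1 : Vec d), (0 : Vec d))‖ = 1 := by
    simp [Prod.norm_def, Pi.norm_single]
  rw [continuous_congr heq]
  refine continuous_of_dominated
    (fun x => Continuous.aestronglyMeasurable ?_)
    (fun x => Filter.Eventually.of_forall fun v => ?_)
    (integrable_decay.const_mul C1)
    (Filter.Eventually.of_forall fun v => ?_)
  · exact ((hfderiv_cont.comp (Continuous.prodMk_right x)).clm_apply continuous_const)
  · have hle := (fderiv ℝ (fun p : Vec d × Vec d => f p.1 p.2) (x, v)).le_opNorm
      ((Pi.single i 1 : Vec d), (0 : Vec d))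
    rw [hnorm_pair, mul_one] at hle
    exact hle.trans ((norm_fderiv_le_iterated _ _ hFd).trans (hC1 x v))
  · exact ((hfderiv_cont.comp (Continuous.prodMk_left v)).clm_apply continuous_const)

end Aux6
section Aux7
variable {d : ℕ}

lemma pd_add_mul {u w : Vec d → ℝ} (hu : ContDiff ℝ (⊤ : ℕ∞) u) (hw : ContDiff ℝ (⊤ : ℕ∞) w) (c : ℝ)
    (i : Fin d) :
    pd i (fun y => u y + c * w y) = fun y => pd i u y + c * pd i w y := by
  funext y
  rw [pd_add i (hu.differentiable (by simp) y) ((contDiff_const.mul hw).differentiable (by simp) y),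
    pd_const_mul i c (hw.differentiable (by simp) y)]

lemma lap_add_mul {u w : Vec d → ℝ} (hu : ContDiff ℝ (⊤ : ℕ∞) u) (hw : ContDiff ℝ (⊤ : ℕ∞) w) (c : ℝ)
    (x : Vec d) :
    lap (fun y => u y + c * w y) x = lap u x + c * lap w x := by
  have e1 : ∀ i : Fin d, pd i (pd i (fun y => u y + c * w y)) x
      = pd i (pd i u) x + c * pd i (pd i w) x := by
    intro i
    rw [pd_add_mul hu hw c i,
      pd_add i ((contDiff_pd hu i).differentiable (by simp) x)
        ((contDiff_const.mul (contDiff_pd hw i)).differentiable (by simp) x),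
      pd_const_mul i c ((contDiff_pd hw i).differentiable (by simp) x)]
  simp only [lap, e1, Finset.sum_add_distrib, Finset.mul_sum]

end Aux7
/-- the directional derivative of `G(g) = ∫ ρ(g)|E(g)|² dx = [[T,U],U](g)`
at `f` in a zero-mean direction `δf` is `∫∫ K(f)(x) δf(x,v) dx dv`, where
`K(f) = |E(f)|² − 2 G₀(f)` and `G₀(f)` is the zero-mean solution of
`Δ_x G₀(f) = div_x(ρ(f) E(f))`: the Fréchet derivative of `[[T,U],U]` at `f` is the
function of `x` alone `K(f)(x) = |E(f)(x)|² − 2 Δ_x^{-1} div_x(ρ(f)E(f))(x)`. -/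
theorem stmt10 (d : ℕ) (f δf : Vec d → Vec d → ℝ)
    (hf : GoodPhase f) (hδf : GoodPhase δf)
    (hzero : (∫ x in Box d, ∫ v, δf x v) = 0)
    (φf : Vec d → ℝ) (hφf : IsElectricPotential f φf)
    (φε : ℝ → Vec d → ℝ)
    (hφε : ∀ ε : ℝ, IsElectricPotential (fun x v => f x v + ε * δf x v) (φε ε))
    (G₀ : Vec d → ℝ)
    (hG₀ : ZeroMeanLapSol
      (fun x => ∑ i, pd i (fun y => dens f y * (- pd i φf y)) x) G₀)
    (K : Vec d → ℝ) (hK : ∀ x, K x = (∑ i, (- pd i φf x) ^ 2) - 2 * G₀ x) :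
    HasDerivAt
      (fun ε => ∫ x in Box d,
        (∫ v, f x v + ε * δf x v) * ∑ i, (- pd i (φε ε) x) ^ 2)
      (∫ x in Box d, ∫ v, K x * δf x v) 0 := by
  obtain ⟨hφs, hφp, hφm, hφl⟩ := hφf
  obtain ⟨hG₀s, hG₀p, hG₀m, hG₀l⟩ := hG₀
  -- linearity of density
  have hdens_lin : ∀ (ε : ℝ) (x : Vec d),
      (∫ v, f x v + ε * δf x v) = dens f x + ε * dens δf x := by
    intro ε x
    rw [integral_add (hf.integrable_v x) ((hδf.integrable_v x).const_mul ε),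
      integral_const_mul]
    rfl
  -- invariance of total mass
  have hmTot : ∀ ε : ℝ, mTot (fun x v => f x v + ε * δf x v) = mTot f := by
    intro ε
    rw [mTot, mTot]
    congr 1
    calc ∫ x in Box d, ∫ v, (f x v + ε * δf x v)
        = ∫ x in Box d, (dens f x + ε * dens δf x) :=
          integral_congr_ae (Filter.Eventually.of_forall fun x => hdens_lin ε x)
      _ = (∫ x in Box d, dens f x) + ε * ∫ x in Box d, dens δf x := by
          rw [integral_add (integrableOn_box hf.dens_continuous)
            ((integrableOn_box hδf.dens_continuous).const_mul ε), integral_const_mul]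
      _ = ∫ x in Box d, ∫ v, f x v := by
          have hz : ∫ x in Box d, dens δf x = 0 := by
            simp only [dens]; exact hzero
          rw [hz, mul_zero, add_zero]; rfl
  -- the first-order potential ψ
  set ψ : Vec d → ℝ := fun x => φε 1 x - φf x with hψdef
  obtain ⟨h1s, h1p, h1m, h1l⟩ := hφε 1
  have hψs : ContDiff ℝ (⊤ : ℕ∞) ψ := h1s.sub hφs
  have hψp : PeriodicVec ψ := fun x k => by simp only [hψdef, h1p x k, hφp x k]
  have hψm : ∫ x in Box d, ψ x = 0 := by
    rw [hψdef]
    rw [integral_sub (integrableOn_box h1s.continuous) (integrableOn_box hφs.continuous),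
      h1m, hφm, sub_self]
  have hψl : ∀ x, lap ψ x = - dens δf x := by
    intro x
    rw [hψdef, lap_sub h1s hφs, h1l x, hφl x, hmTot 1]
    have := hdens_lin 1 x
    simp only [dens] at this ⊢
    rw [this]
    ring
  -- φε ε = φf + ε ψ
  have hsol : ∀ ε : ℝ, ZeroMeanLapSol
      (fun x => mTot (fun x v => f x v + ε * δf x v)
        - dens (fun x v => f x v + ε * δf x v) x) (fun x => φf x + ε * ψ x) := by
    intro ε
    refine ⟨hφs.add (contDiff_const.mul hψs), ?_, ?_, ?_⟩
    · intro x k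
      simp only [hφp x k, hψp x k]
    · rw [integral_add (integrableOn_box hφs.continuous)
        ((integrableOn_box hψs.continuous).const_mul ε), integral_const_mul, hφm, hψm,
        mul_zero, add_zero]
    · intro x
      rw [lap_add_mul hφs hψs ε x, hφl x, hψl x, hmTot ε]
      have := hdens_lin ε x
      simp only [dens] at this ⊢
      rw [this]
      ring
  have hφε_eq : ∀ ε : ℝ, φε ε = fun x => φf x + ε * ψ x := fun ε =>
    zeroMeanLapSol_unique (hφε ε) (hsol ε)
  -- notation for the derivatives
  set p : Fin d → Vec d → ℝ := fun i => pd i φf with hpdef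
  set q : Fin d → Vec d → ℝ := fun i => pd i ψ with hqdef
  have hpd_eps : ∀ (ε : ℝ) (i : Fin d) (x : Vec d),
      pd i (φε ε) x = p i x + ε * q i x := by
    intro ε i x
    rw [hφε_eq ε,
      pd_add i (hφs.differentiable (by simp) x)
        ((contDiff_const.mul hψs).differentiable (by simp) x),
      pd_const_mul i ε (hψs.differentiable (by simp) x)]
  have hpc : ∀ i, Continuous (p i) := fun i => pd_continuous hφs i
  have hqc : ∀ i, Continuous (q i) := fun i => pd_continuous hψs i
  -- coefficient functions
  set cf : Vec d → ℝ := fun x => ∑ i, p i x ^ 2 with hcf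
  set ef : Vec d → ℝ := fun x => ∑ i, p i x * q i x with hef
  set gf : Vec d → ℝ := fun x => ∑ i, q i x ^ 2 with hgf
  have hcfc : Continuous cf := continuous_finset_sum _ fun i _ => (hpc i).pow 2
  have hefc : Continuous ef := continuous_finset_sum _ fun i _ => (hpc i).mul (hqc i)
  have hgfc : Continuous gf := continuous_finset_sum _ fun i _ => (hqc i).pow 2
  have hac : Continuous (dens f) := hf.dens_continuous
  have hbc : Continuous (dens δf) := hδf.dens_continuous
  set P0 : Vec d → ℝ := fun x => dens f x * cf x with hP0
  set P1 : Vec d → ℝ := fun x => dens δf x * cf x + 2 * (dens f x * ef x) with hP1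
  set P2 : Vec d → ℝ := fun x => dens f x * gf x + 2 * (dens δf x * ef x) with hP2
  set P3 : Vec d → ℝ := fun x => dens δf x * gf x with hP3
  have hP0i : IntegrableOn P0 (Box d) := integrableOn_box (hac.mul hcfc)
  have hP1i : IntegrableOn P1 (Box d) := integrableOn_box
    ((hbc.mul hcfc).add (continuous_const.mul (hac.mul hefc)))
  have hP2i : IntegrableOn P2 (Box d) := integrableOn_box
    ((hac.mul hgfc).add (continuous_const.mul (hbc.mul hefc)))
  have hP3i : IntegrableOn P3 (Box d) := integrableOn_box (hbc.mul hgfc)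
  -- pointwise expansion
  have hpoint : ∀ (ε : ℝ) (x : Vec d),
      (∫ v, f x v + ε * δf x v) * ∑ i, (- pd i (φε ε) x) ^ 2
        = P0 x + ε * P1 x + ε ^ 2 * P2 x + ε ^ 3 * P3 x := by
    intro ε x
    have hsq : ∀ i : Fin d, (- pd i (φε ε) x) ^ 2 = (p i x + ε * q i x) ^ 2 := by
      intro i
      rw [neg_sq, hpd_eps ε i x]
    have hsum : ∑ i, (- pd i (φε ε) x) ^ 2
        = cf x + ε * (2 * ef x) + ε ^ 2 * gf x := by
      rw [Finset.sum_congr rfl fun i _ => hsq i]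
      simp only [hcf, hef, hgf, Finset.mul_sum]
      rw [← Finset.sum_add_distrib, ← Finset.sum_add_distrib]
      exact Finset.sum_congr rfl fun i _ => by ring
    rw [hdens_lin ε x, hsum, hP0, hP1, hP2, hP3]
    ring
  -- the integral as a cubic polynomial in ε
  have hFeq : ∀ ε : ℝ,
      (∫ x in Box d, (∫ v, f x v + ε * δf x v) * ∑ i, (- pd i (φε ε) x) ^ 2)
        = (∫ x in Box d, P0 x) + ε * (∫ x in Box d, P1 x)
          + ε ^ 2 * (∫ x in Box d, P2 x) + ε ^ 3 * (∫ x in Box d, P3 x) := by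
    intro ε
    rw [integral_congr_ae (Filter.Eventually.of_forall fun x => hpoint ε x)]
    have i1 : IntegrableOn (fun x => ε * P1 x) (Box d) volume := hP1i.const_mul ε
    have i2 : IntegrableOn (fun x => ε ^ 2 * P2 x) (Box d) volume := hP2i.const_mul _
    have i3 : IntegrableOn (fun x => ε ^ 3 * P3 x) (Box d) volume := hP3i.const_mul _
    have i01 : IntegrableOn (fun x => P0 x + ε * P1 x) (Box d) volume := hP0i.add i1
    have i012 : IntegrableOn (fun x => P0 x + ε * P1 x + ε ^ 2 * P2 x) (Box d) volume :=
      i01.add i2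
    rw [integral_add i012 i3, integral_add i01 i2, integral_add hP0i i1,
      integral_const_mul, integral_const_mul, integral_const_mul]
  -- derivative of the cubic polynomial at 0
  have hder : HasDerivAt
      (fun ε : ℝ => (∫ x in Box d, P0 x) + ε * (∫ x in Box d, P1 x)
        + ε ^ 2 * (∫ x in Box d, P2 x) + ε ^ 3 * (∫ x in Box d, P3 x))
      (∫ x in Box d, P1 x) 0 := by
    have h := (((hasDerivAt_const (0:ℝ) (∫ x in Box d, P0 x)).fun_add
      ((hasDerivAt_id (0:ℝ)).mul_const (∫ x in Box d, P1 x))).fun_add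
      ((hasDerivAt_pow 2 (0:ℝ)).mul_const (∫ x in Box d, P2 x))).fun_add
      ((hasDerivAt_pow 3 (0:ℝ)).mul_const (∫ x in Box d, P3 x))
    simpa using h
  -- the key integration by parts identity
  have hkey : ∫ x in Box d, dens f x * ef x = - ∫ x in Box d, G₀ x * dens δf x := by
    have step1 : ∀ i : Fin d,
        ∫ x in Box d, dens f x * (p i x * q i x)
          = ∫ x in Box d, pd i (fun y => dens f y * (- pd i φf y)) x * ψ x := by
      intro i
      have hhd : Differentiable ℝ (fun y => dens f y * (- pd i φf y)) :=
        hf.dens_differentiable.mul ((contDiff_pd hφs i).differentiable (by simp)).neg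
      have hhpd_eq : pd i (fun y => dens f y * (- pd i φf y))
          = fun x => pd i (dens f) x * (- pd i φf x)
            + dens f x * pd i (fun y => - pd i φf y) x := by
        funext x
        exact pd_mul i (hf.dens_differentiable x)
          (((contDiff_pd hφs i).differentiable (by simp)).neg x)
      have hhpc : Continuous (pd i (fun y => dens f y * (- pd i φf y))) := by
        rw [hhpd_eq]
        exact ((hf.pd_dens_continuous i).mul (hpc i).neg).add
          (hac.mul (pd_continuous (contDiff_pd hφs i).neg i))
      have hhper : PeriodicVec (fun y => dens f y * (- pd i φf y)) := by
        intro x k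
        simp only [hf.dens_periodic x k, periodic_pd hφp (hφs.differentiable (by simp)) i x k]
      have hibp := ibp i hhd (hψs.differentiable (by simp)) hhpc (pd_continuous hψs i)
        hhper hψp
      -- hibp : ∫ pd i h_i * ψ = - ∫ h_i * pd i ψ
      rw [hibp]
      rw [← integral_neg]
      refine integral_congr_ae (Filter.Eventually.of_forall fun x => ?_)
      show dens f x * (p i x * q i x) = -(dens f x * (- pd i φf x) * pd i ψ x)
      rw [hpdef, hqdef]
      ring
    calc ∫ x in Box d, dens f x * ef x
        = ∫ x in Box d, ∑ i, dens f x * (p i x * q i x) := by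
          refine integral_congr_ae (Filter.Eventually.of_forall fun x => ?_)
          simp only [hef, Finset.mul_sum]
      _ = ∑ i, ∫ x in Box d, dens f x * (p i x * q i x) :=
          integral_finset_sum _ fun i _ => integrableOn_box
            (hac.mul ((hpc i).mul (hqc i)))
      _ = ∑ i, ∫ x in Box d, pd i (fun y => dens f y * (- pd i φf y)) x * ψ x :=
          Finset.sum_congr rfl fun i _ => step1 i
      _ = ∫ x in Box d, ∑ i, pd i (fun y => dens f y * (- pd i φf y)) x * ψ x := by
          refine (integral_finset_sum _ fun i _ => integrableOn_box ?_).symm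
          have hhpd_eq : pd i (fun y => dens f y * (- pd i φf y))
              = fun x => pd i (dens f) x * (- pd i φf x)
                + dens f x * pd i (fun y => - pd i φf y) x := by
            funext x
            exact pd_mul i (hf.dens_differentiable x)
              (((contDiff_pd hφs i).differentiable (by simp)).neg x)
          refine Continuous.mul ?_ hψs.continuous
          rw [hhpd_eq]
          exact ((hf.pd_dens_continuous i).mul (hpc i).neg).add
            (hac.mul (pd_continuous (contDiff_pd hφs i).neg i))
      _ = ∫ x in Box d, lap G₀ x * ψ x := by
          refine integral_congr_ae (Filter.Eventually.of_forall fun x => ?_)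
          simp only [hG₀l, Finset.sum_mul]
      _ = ∫ x in Box d, G₀ x * lap ψ x := int_lap_mul hG₀s hG₀p hψs hψp
      _ = - ∫ x in Box d, G₀ x * dens δf x := by
          rw [← integral_neg]
          refine integral_congr_ae (Filter.Eventually.of_forall fun x => ?_)
          simp only [hψl]
          ring
  -- identify the derivative with the target integral
  have htarget : ∫ x in Box d, (∫ v, K x * δf x v) = ∫ x in Box d, P1 x := by
    have hKx : ∀ x, K x = cf x - 2 * G₀ x := by
      intro x
      rw [hK x, hcf]
      congr 1
      exact Finset.sum_congr rfl fun i _ => by rw [neg_sq, hpdef]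
    calc ∫ x in Box d, (∫ v, K x * δf x v)
        = ∫ x in Box d, K x * dens δf x := by
          refine integral_congr_ae (Filter.Eventually.of_forall fun x => ?_)
          show (∫ v, K x * δf x v) = K x * dens δf x
          rw [integral_const_mul]
          rfl
      _ = ∫ x in Box d, (dens δf x * cf x - 2 * (G₀ x * dens δf x)) := by
          refine integral_congr_ae (Filter.Eventually.of_forall fun x => ?_)
          simp only [hKx]
          ring
      _ = (∫ x in Box d, dens δf x * cf x) - 2 * ∫ x in Box d, G₀ x * dens δf x := by
          rw [integral_sub (integrableOn_box (hbc.fun_mul hcfc))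
            ((integrableOn_box (hG₀s.continuous.fun_mul hbc)).const_mul 2), integral_const_mul]
      _ = ∫ x in Box d, P1 x := by
          rw [hP1]
          rw [integral_add (integrableOn_box (hbc.fun_mul hcfc))
            ((integrableOn_box (hac.fun_mul hefc)).const_mul 2), integral_const_mul, hkey]
          ring
  rw [show (fun ε : ℝ => ∫ x in Box d,
      (∫ v, f x v + ε * δf x v) * ∑ i, (- pd i (φε ε) x) ^ 2)
    = fun ε : ℝ => (∫ x in Box d, P0 x) + ε * (∫ x in Box d, P1 x)
      + ε ^ 2 * (∫ x in Box d, P2 x) + ε ^ 3 * (∫ x in Box d, P3 x)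
    from funext hFeq, htarget]
  exact hder
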